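/- Let E_i(v) denote the set of edges incoming to v which have been incrementally updated, and let G' be the resulting graph. For any s ∈ V and t ∈ V \ {v}, let D(s,t) = d'(s,v) + d(v,t). Then: (1) if d(s,t) < D(s,t), then d'(s,t) = d(s,t) and σ'_{st} = σ_{st}; (2) if d(s,t) = D(s,t) and d(s,v) = d'(s,v), then d'(s,t) = d(s,t) and σ'_{st} = σ_{st} + σ̂'_{sv} · σ_{vt}; (3) if d(s,t) = D(s,t) and d(s,v) > d'(s,v), then d'(s,t) = d(s,t) and σ'_{st} = σ_{st} + σ'_{sv} · σ_{vt}; (4) if d(s,t) > D(s,t), then d'(s,t) = D(s,t) and σ'_{st} = σ'_{sv} · σ_{vt}. -/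

import Mathlib

/-!
Shortest paths of `G'` are simple, since all weights are positive. Such a path either avoids the
updated edges, and is then a path of `G` of the same weight, or it uses one of them; in the latter
case it visits `v` once, so it splits uniquely at `v` into an `s`–`v` path of `G'` ending with an
updated edge, followed by a `v`–`t` path that avoids the updated edges and hence lives in `G`.
Comparing weights gives `d'(s,t) = min (d(s,t), D(s,t))`. The shortest paths avoiding the update
are exactly those of `G` when `d'(s,t) = d(s,t)` (a shortest path of `G` through an updated edge
would become strictly shorter), and, when `d'(s,t) = D(s,t)`, the splitting is a bijection between
the shortest paths using the update and pairs of shortest paths `s → v` of `G'` using it and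
`v → t` of `G`. Finally, when `d'(s,v) < d(s,v)` every shortest `s`–`v` path of `G'` uses the
update, so `σ̂'_{sv} = σ'_{sv}`.
-/

open scoped ENNReal

namespace BC

variable {V : Type*}

/-- `p` is a path from `s` to `t` in the weighted digraph with weight function `w`;
an edge is present iff its weight is not `⊤`. -/
def IsPath (w : V → V → ℝ≥0∞) (s t : V) (p : List V) : Prop :=
  p ≠ [] ∧ p.head? = some s ∧ p.getLast? = some t ∧ p.Chain' (fun a b => w a b ≠ ⊤)

/-- The weight of a path: the sum of the weights of its consecutive edges. -/
noncomputable def pWeight (w : V → V → ℝ≥0∞) (p : List V) : ℝ≥0∞ :=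
  ((p.zip p.tail).map fun e => w e.1 e.2).sum

/-- The shortest-path distance `d(s,t)` (equal to `⊤` if no path exists). -/
noncomputable def dist (w : V → V → ℝ≥0∞) (s t : V) : ℝ≥0∞ :=
  ⨅ p ∈ {p | IsPath w s t p}, pWeight w p

/-- `p` is a shortest path from `s` to `t`. -/
def IsShortest (w : V → V → ℝ≥0∞) (s t : V) (p : List V) : Prop :=
  IsPath w s t p ∧ pWeight w p = dist w s t

/-- `σ_{st}`: the number of shortest paths from `s` to `t`. -/
noncomputable def nsp (w : V → V → ℝ≥0∞) (s t : V) : ℕ :=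
  Set.ncard {p | IsShortest w s t p}

/-- `σ_{st}(x)`: the number of shortest paths from `s` to `t` passing through `x`. -/
noncomputable def nspVia (w : V → V → ℝ≥0∞) (s t x : V) : ℕ :=
  Set.ncard {p | IsShortest w s t p ∧ x ∈ p}

/-- The directed edge `(a,b)` lies on the path `p`. -/
def edgeOn (p : List V) (a b : V) : Prop := (a, b) ∈ p.zip p.tail

/-- The shortest-path DAG rooted at `s`: the edges lying on shortest paths from `s`. -/
def dagSet (w : V → V → ℝ≥0∞) (s : V) : Set (V × V) :=
  {e | w e.1 e.2 ≠ ⊤ ∧ dist w s e.1 ≠ ⊤ ∧ dist w s e.1 + w e.1 e.2 = dist w s e.2}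

def edges (l : List V) : List (V × V) := l.zip l.tail

@[simp] lemma edges_nil : edges ([] : List V) = [] := rfl
@[simp] lemma edges_singleton (a : V) : edges [a] = [] := rfl
@[simp] lemma edges_cons_cons (a b : V) (l : List V) :
    edges (a :: b :: l) = (a, b) :: edges (b :: l) := rfl

lemma edges_append_cons (l₁ : List V) (x : V) (l₂ : List V) :
    edges (l₁ ++ x :: l₂) = edges (l₁ ++ [x]) ++ edges (x :: l₂) := by
  induction l₁ using List.twoStepInduction <;> simp_all

lemma isChain_iff_forall_mem_edges {R : V → V → Prop} {l : List V} :
    l.IsChain R ↔ ∀ e ∈ edges l, R e.1 e.2 := by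
  induction l using List.twoStepInduction <;> simp_all

lemma pWeight_eq_sum_edges (w : V → V → ℝ≥0∞) (l : List V) :
    pWeight w l = ((edges l).map fun e => w e.1 e.2).sum := rfl

lemma pWeight_cons_cons (w : V → V → ℝ≥0∞) (a b : V) (l : List V) :
    pWeight w (a :: b :: l) = w a b + pWeight w (b :: l) := rfl

lemma pWeight_append_cons (w : V → V → ℝ≥0∞) (l₁ : List V) (x : V) (l₂ : List V) :
    pWeight w (l₁ ++ x :: l₂) = pWeight w (l₁ ++ [x]) + pWeight w (x :: l₂) := by
  rw [pWeight_eq_sum_edges, edges_append_cons, List.map_append, List.sum_append]; rfl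

variable {w w' : V → V → ℝ≥0∞} {s t x : V} {p q r : List V}

lemma isPath_append_cons_iff :
    IsPath w s t (q ++ x :: r) ↔ IsPath w s x (q ++ [x]) ∧ IsPath w x t (x :: r) := by
  have hhead : (q ++ x :: r).head? = (q ++ [x]).head? := by cases q <;> simp
  have hlast : (q ++ x :: r).getLast? = (x :: r).getLast? :=
    List.getLast?_append_of_ne_nil _ (List.cons_ne_nil x r)
  have hchain := List.isChain_split (R := fun a b => w a b ≠ ⊤) (c := x) (l₁ := q) (l₂ := r)
  constructor
  · rintro ⟨-, hs, ht, hc⟩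
    exact ⟨⟨by simp, hhead ▸ hs, by simp, (hchain.1 hc).1⟩,
      ⟨by simp, rfl, hlast ▸ ht, (hchain.1 hc).2⟩⟩
  · rintro ⟨⟨-, hs, -, hc₁⟩, ⟨-, -, ht, hc₂⟩⟩
    exact ⟨by simp, hhead ▸ hs, hlast ▸ ht, hchain.2 ⟨hc₁, hc₂⟩⟩

lemma IsPath.eq_cons (hp : IsPath w s t p) : ∃ p₀, p = s :: p₀ :=
  List.head?_eq_some_iff.1 hp.2.1

lemma IsPath.eq_append_singleton (hp : IsPath w s t p) : ∃ p₀, p = p₀ ++ [t] :=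
  List.getLast?_eq_some_iff.1 hp.2.2.1

lemma list_sum_ne_top {l : List ℝ≥0∞} (h : ∀ a ∈ l, a ≠ ⊤) : l.sum ≠ ⊤ := by
  induction l <;> simp_all

lemma IsPath.pWeight_ne_top (hp : IsPath w s t p) : pWeight w p ≠ ⊤ :=
  list_sum_ne_top fun _ ha => by
    obtain ⟨e, he, rfl⟩ := List.mem_map.1 ha
    exact isChain_iff_forall_mem_edges.1 hp.2.2.2 e he

lemma dist_le_pWeight (hp : IsPath w s t p) : dist w s t ≤ pWeight w p :=
  iInf₂_le p hp

lemma IsShortest.dist_ne_top (hp : IsShortest w s t p) : dist w s t ≠ ⊤ :=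
  hp.2 ▸ hp.1.pWeight_ne_top

lemma setOf_isShortest_and_eq_empty (h : dist w s t = ⊤) (P : List V → Prop) :
    {p | IsShortest w s t p ∧ P p} = ∅ :=
  Set.eq_empty_of_forall_notMem fun _ hp => hp.1.dist_ne_top h

lemma nsp_eq_zero_of_dist_eq_top (h : dist w s t = ⊤) : nsp w s t = 0 := by
  rw [nsp, Set.eq_empty_of_forall_notMem (s := {p | IsShortest w s t p})
    fun _ hp => hp.dist_ne_top h, Set.ncard_empty]

lemma IsPath.shortcut {a b c : List V} (hp : IsPath w s t (a ++ x :: (b ++ x :: c))) :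
    IsPath w s t (a ++ x :: c) ∧
      pWeight w (a ++ x :: (b ++ x :: c)) =
        pWeight w (a ++ x :: c) + pWeight w (x :: b ++ [x]) := by
  have hsplit : x :: (b ++ x :: c) = x :: b ++ x :: c := rfl
  obtain ⟨hpre, hpost⟩ := isPath_append_cons_iff.1 hp
  rw [hsplit] at hpost
  refine ⟨isPath_append_cons_iff.2 ⟨hpre, (isPath_append_cons_iff.1 hpost).2⟩, ?_⟩
  rw [pWeight_append_cons w a x (b ++ x :: c), hsplit, pWeight_append_cons w (x :: b) x c,
    pWeight_append_cons w a x c, add_right_comm, add_assoc]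

lemma pWeight_cycle_pos (hpos : ∀ a b, 0 < w a b) (x : V) (b : List V) :
    0 < pWeight w (x :: b ++ [x]) := by
  obtain ⟨y, l, hyl⟩ := List.exists_cons_of_ne_nil (List.append_ne_nil_of_right_ne_nil b
    (List.cons_ne_nil x []))
  rw [List.cons_append, hyl, pWeight_cons_cons]
  exact (hpos x y).trans_le le_self_add

lemma exists_eq_append_cons_append_cons_of_not_nodup {l : List V} (h : ¬l.Nodup) :
    ∃ a x b c, l = a ++ x :: (b ++ x :: c) := by
  induction l with
  | nil => simp at h
  | cons y l ih =>
    by_cases hy : y ∈ l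
    · obtain ⟨b, c, rfl⟩ := List.append_of_mem hy
      exact ⟨[], y, b, c, rfl⟩
    · obtain ⟨a, x, b, c, rfl⟩ := ih fun hl => h (List.nodup_cons.2 ⟨hy, hl⟩)
      exact ⟨y :: a, x, b, c, rfl⟩

lemma IsShortest.nodup (hpos : ∀ a b, 0 < w a b) (hp : IsShortest w s t p) : p.Nodup := by
  by_contra hnd
  obtain ⟨a, x, b, c, rfl⟩ := exists_eq_append_cons_append_cons_of_not_nodup hnd
  obtain ⟨hp', hweight⟩ := hp.1.shortcut
  have hlt : pWeight w (a ++ x :: c) < dist w s t := by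
    rw [← hp.2, hweight]
    exact ENNReal.lt_add_right hp'.pWeight_ne_top (pWeight_cycle_pos hpos x b).ne'
  exact (dist_le_pWeight hp').not_gt hlt

lemma IsPath.exists_nodup (hp : IsPath w s t p) :
    ∃ q, IsPath w s t q ∧ q.Nodup ∧ pWeight w q ≤ pWeight w p := by
  induction hn : p.length using Nat.strong_induction_on generalizing p with
  | _ n ih =>
    by_cases hnd : p.Nodup
    · exact ⟨p, hp, hnd, le_rfl⟩
    obtain ⟨a, x, b, c, rfl⟩ := exists_eq_append_cons_append_cons_of_not_nodup hnd
    obtain ⟨hp', hweight⟩ := hp.shortcut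
    obtain ⟨q, hq, hqnd, hle⟩ := ih _ (by simp [← hn]) hp' rfl
    exact ⟨q, hq, hqnd, hle.trans (hweight ▸ le_self_add)⟩

lemma exists_isShortest [Fintype V] (h : dist w s t ≠ ⊤) : ∃ p, IsShortest w s t p := by
  obtain ⟨p₀, hp₀⟩ : ∃ p, IsPath w s t p := by
    by_contra! hno
    exact h (by simp [dist, hno])
  obtain ⟨q₀, hq₀, hq₀nd, -⟩ := hp₀.exists_nodup
  have hfin : {p | IsPath w s t p ∧ p.Nodup}.Finite :=
    (List.finite_length_le V (Fintype.card V)).subset fun p hp => hp.2.length_le_card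
  obtain ⟨p, hp, hmin⟩ := Set.exists_min_image _ (pWeight w) hfin ⟨q₀, hq₀, hq₀nd⟩
  refine ⟨p, hp.1, le_antisymm (le_iInf₂ fun q hq => ?_) (dist_le_pWeight hp.1)⟩
  obtain ⟨q', hq', hq'nd, hle⟩ := IsPath.exists_nodup hq
  exact (hmin q' ⟨hq', hq'nd⟩).trans hle

lemma setOf_isShortest_finite [Fintype V] (hpos : ∀ a b, 0 < w a b) (s t : V) :
    {p | IsShortest w s t p}.Finite :=
  (List.finite_length_le V (Fintype.card V)).subset fun _ hp => (hp.nodup hpos).length_le_card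

lemma dist_triangle [Fintype V] (w : V → V → ℝ≥0∞) (s x t : V) :
    dist w s t ≤ dist w s x + dist w x t := by
  by_cases hsx : dist w s x = ⊤
  · simp [hsx]
  by_cases hxt : dist w x t = ⊤
  · simp [hxt]
  obtain ⟨q, hq⟩ := exists_isShortest hsx
  obtain ⟨r, hr⟩ := exists_isShortest hxt
  obtain ⟨q₀, rfl⟩ := hq.1.eq_append_singleton
  obtain ⟨r₀, rfl⟩ := hr.1.eq_cons
  calc dist w s t ≤ pWeight w (q₀ ++ x :: r₀) :=
        dist_le_pWeight (isPath_append_cons_iff.2 ⟨hq.1, hr.1⟩)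
    _ = dist w s x + dist w x t := by rw [pWeight_append_cons, hq.2, hr.2]

lemma IsPath.mono (hle : ∀ a b, w' a b ≤ w a b) (hp : IsPath w s t p) : IsPath w' s t p :=
  ⟨hp.1, hp.2.1, hp.2.2.1, hp.2.2.2.imp fun a b hab => ne_top_of_le_ne_top hab (hle a b)⟩

lemma pWeight_mono (hle : ∀ a b, w' a b ≤ w a b) (p : List V) : pWeight w' p ≤ pWeight w p :=
  List.sum_le_sum fun e _ => hle e.1 e.2

lemma dist_mono (hle : ∀ a b, w' a b ≤ w a b) (s t : V) : dist w' s t ≤ dist w s t :=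
  le_iInf₂ fun p hp => (dist_le_pWeight (hp.mono hle)).trans (pWeight_mono hle p)

lemma pWeight_lt_pWeight_of_mem_edges (hle : ∀ a b, w' a b ≤ w a b) {a b : V}
    (he : (a, b) ∈ edges p) (hlt : w' a b < w a b) (hfin : pWeight w p ≠ ⊤) :
    pWeight w' p < pWeight w p := by
  obtain ⟨l₁, l₂, hl⟩ := List.append_of_mem he
  have hsum (l : List (V × V)) : (l.map fun e => w' e.1 e.2).sum ≤ (l.map fun e => w e.1 e.2).sum :=
    List.sum_le_sum fun e _ => hle e.1 e.2
  rw [pWeight_eq_sum_edges, hl] at hfin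
  rw [pWeight_eq_sum_edges, pWeight_eq_sum_edges, hl]
  simp only [List.map_append, List.map_cons, List.sum_append, List.sum_cons] at hfin ⊢
  obtain ⟨hfin₁, hfin₂⟩ := ENNReal.add_ne_top.1 hfin
  exact ENNReal.add_lt_add_of_le_of_lt (ne_top_of_le_ne_top hfin₁ (hsum l₁)) (hsum l₁)
    (ENNReal.add_lt_add_of_lt_of_le (ne_top_of_le_ne_top (ENNReal.add_ne_top.1 hfin₂).2 (hsum l₂))
      hlt (hsum l₂))

lemma isShortest_append_cons (hle : ∀ a b, w' a b ≤ w a b)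
    (hst : dist w' s t = dist w' s x + dist w x t) (hq : IsShortest w' s x (q ++ [x]))
    (hr : IsShortest w x t (x :: r)) : IsShortest w' s t (q ++ x :: r) := by
  have hp := isPath_append_cons_iff.2 ⟨hq.1, hr.1.mono hle⟩
  refine ⟨hp, le_antisymm ?_ (dist_le_pWeight hp)⟩
  calc pWeight w' (q ++ x :: r) = pWeight w' (q ++ [x]) + pWeight w' (x :: r) :=
        pWeight_append_cons w' q x r
    _ ≤ dist w' s x + dist w x t := by rw [hq.2, ← hr.2]; gcongr; exact pWeight_mono hle _
    _ = dist w' s t := hst.symm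

lemma notMem_of_nodup_append_cons (h : (q ++ x :: r).Nodup) : x ∉ q ∧ x ∉ r := by
  simpa using (List.nodup_cons.1 (List.nodup_middle.1 h)).1

lemma nsp_eq_ncard_add_ncard [Fintype V] (hpos : ∀ a b, 0 < w a b) (P : List V → Prop)
    (s t : V) :
    nsp w s t = {p | IsShortest w s t p ∧ ¬P p}.ncard + {p | IsShortest w s t p ∧ P p}.ncard := by
  have hfin := setOf_isShortest_finite hpos s t
  rw [← Set.ncard_union_eq (Set.disjoint_left.2 fun _ hp hp' => hp.2 hp'.2)
    (hfin.subset fun _ hp => hp.1) (hfin.subset fun _ hp => hp.1), nsp]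
  congr 1
  ext p
  by_cases hp : P p <;> simp [hp]

lemma eq_and_eq_of_add_eq_add {a b c d : ℝ≥0∞} (hca : c ≤ a) (hdb : d ≤ b) (h : a + b = c + d)
    (hfin : c + d ≠ ⊤) : a = c ∧ b = d := by
  obtain ⟨ha, hb⟩ := ENNReal.add_ne_top.1 (h ▸ hfin)
  obtain ⟨hc, hd⟩ := ENNReal.add_ne_top.1 hfin
  lift a to NNReal using ha
  lift b to NNReal using hb
  lift c to NNReal using hc
  lift d to NNReal using hd
  norm_cast at *
  exact ((add_eq_add_iff_eq_and_eq hca hdb).1 h.symm).imp Eq.symm Eq.symm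

section Update

variable {U : Finset V} {v : V}

def AgreeOff (U : Finset V) (v : V) (w w' : V → V → ℝ≥0∞) : Prop :=
  ∀ a b, ¬(b = v ∧ a ∈ U) → w' a b = w a b

def UsesUpdatedEdge (U : Finset V) (v : V) (p : List V) : Prop := ∃ u ∈ U, edgeOn p u v

lemma not_usesUpdatedEdge_of_notMem_tail (h : v ∉ p.tail) : ¬UsesUpdatedEdge U v p :=
  fun ⟨_, _, he⟩ => h (List.of_mem_zip he).2

lemma UsesUpdatedEdge.append_cons (h : UsesUpdatedEdge U v (q ++ [v])) :
    UsesUpdatedEdge U v (q ++ v :: r) := by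
  obtain ⟨u, hu, he⟩ := h
  refine ⟨u, hu, ?_⟩
  change (u, v) ∈ edges _
  rw [edges_append_cons]
  exact List.mem_append_left _ he

lemma AgreeOff.le (hw : AgreeOff U v w w') (hdec : ∀ u ∈ U, w' u v < w u v) (a b : V) :
    w' a b ≤ w a b := by
  by_cases h : b = v ∧ a ∈ U
  · obtain ⟨rfl, ha⟩ := h
    exact (hdec a ha).le
  · exact (hw a b h).le

lemma AgreeOff.eq_of_mem_edges (hw : AgreeOff U v w w') (hp : ¬UsesUpdatedEdge U v p)
    {e : V × V} (he : e ∈ edges p) : w' e.1 e.2 = w e.1 e.2 :=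
  hw e.1 e.2 fun ⟨hv, hu⟩ => hp ⟨e.1, hu, hv ▸ he⟩

lemma AgreeOff.pWeight_eq (hw : AgreeOff U v w w') (hp : ¬UsesUpdatedEdge U v p) :
    pWeight w' p = pWeight w p :=
  congrArg List.sum (List.map_congr_left fun _ he => hw.eq_of_mem_edges hp he)

lemma AgreeOff.isPath_iff (hw : AgreeOff U v w w') (hp : ¬UsesUpdatedEdge U v p) :
    IsPath w' s t p ↔ IsPath w s t p := by
  have hchain : p.IsChain (fun a b => w' a b ≠ ⊤) ↔ p.IsChain (fun a b => w a b ≠ ⊤) := by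
    simp only [isChain_iff_forall_mem_edges]
    exact forall₂_congr fun _ he => by rw [hw.eq_of_mem_edges hp he]
  exact Iff.rfl.and (Iff.rfl.and (Iff.rfl.and hchain))

lemma IsShortest.exists_eq_append_cons (hpos' : ∀ a b, 0 < w' a b) (hw : AgreeOff U v w w')
    (hp : IsShortest w' s t p) (hu : UsesUpdatedEdge U v p) :
    ∃ q r, p = q ++ v :: r ∧ IsPath w' s v (q ++ [v]) ∧ UsesUpdatedEdge U v (q ++ [v]) ∧
      IsPath w v t (v :: r) ∧ pWeight w' p = pWeight w' (q ++ [v]) + pWeight w (v :: r) := by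
  obtain ⟨u, hu, he⟩ := hu
  obtain ⟨q, r, rfl⟩ := List.append_of_mem (List.mem_of_mem_tail (List.of_mem_zip he).2)
  have hvr : ¬UsesUpdatedEdge U v (v :: r) :=
    not_usesUpdatedEdge_of_notMem_tail (notMem_of_nodup_append_cons (hp.nodup hpos')).2
  obtain ⟨hq, hr⟩ := isPath_append_cons_iff.1 hp.1
  refine ⟨q, r, rfl, hq, ⟨u, hu, ?_⟩, (hw.isPath_iff hvr).1 hr, ?_⟩
  · change (u, v) ∈ edges _ at he
    rw [edges_append_cons, List.mem_append] at he
    exact he.resolve_right fun h => hvr ⟨u, hu, h⟩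
  · rw [pWeight_append_cons, hw.pWeight_eq hvr]

lemma IsShortest.dist_add_dist_le (hpos' : ∀ a b, 0 < w' a b) (hw : AgreeOff U v w w')
    (hp : IsShortest w' s t p) (hu : UsesUpdatedEdge U v p) :
    dist w' s v + dist w v t ≤ dist w' s t := by
  obtain ⟨q, r, rfl, hq, -, hr, hweight⟩ := hp.exists_eq_append_cons hpos' hw hu
  rw [← hp.2, hweight]
  exact add_le_add (dist_le_pWeight hq) (dist_le_pWeight hr)

lemma dist_eq_min_of_agreeOff [Fintype V] (hpos' : ∀ a b, 0 < w' a b) (hw : AgreeOff U v w w')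
    (hdec : ∀ u ∈ U, w' u v < w u v) (s t : V) :
    dist w' s t = min (dist w s t) (dist w' s v + dist w v t) := by
  have hle := hw.le hdec
  refine le_antisymm (le_min (dist_mono hle s t) ?_) ?_
  · calc dist w' s t ≤ dist w' s v + dist w' v t := dist_triangle w' s v t
      _ ≤ dist w' s v + dist w v t := by gcongr; exact dist_mono hle v t
  by_cases hfin : dist w' s t = ⊤
  · exact hfin ▸ le_top
  obtain ⟨p, hp⟩ := exists_isShortest hfin
  by_cases hu : UsesUpdatedEdge U v p
  · exact (min_le_right _ _).trans (hp.dist_add_dist_le hpos' hw hu)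
  · rw [← hp.2, hw.pWeight_eq hu]
    exact (min_le_left _ _).trans (dist_le_pWeight ((hw.isPath_iff hu).1 hp.1))

lemma ncard_isShortest_not_usesUpdatedEdge (hw : AgreeOff U v w w')
    (hdec : ∀ u ∈ U, w' u v < w u v) (hdd : dist w' s t = dist w s t) :
    {p | IsShortest w' s t p ∧ ¬UsesUpdatedEdge U v p}.ncard = nsp w s t := by
  refine congrArg Set.ncard (Set.ext fun p => ⟨fun ⟨hp, hu⟩ => ?_, fun hp => ?_⟩)
  · exact ⟨(hw.isPath_iff hu).1 hp.1, by rw [← hw.pWeight_eq hu, hp.2, hdd]⟩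
  have hu : ¬UsesUpdatedEdge U v p := fun ⟨u, hu, he⟩ => by
    have hlt :=
      pWeight_lt_pWeight_of_mem_edges (hw.le hdec) he (hdec u hu) hp.1.pWeight_ne_top
    rw [hp.2, ← hdd] at hlt
    exact (dist_le_pWeight (hp.1.mono (hw.le hdec))).not_gt hlt
  exact ⟨⟨(hw.isPath_iff hu).2 hp.1, by rw [hw.pWeight_eq hu, hp.2, hdd]⟩, hu⟩

lemma ncard_isShortest_usesUpdatedEdge_eq_zero (hpos' : ∀ a b, 0 < w' a b)
    (hw : AgreeOff U v w w') (h : dist w' s t < dist w' s v + dist w v t) :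
    {p | IsShortest w' s t p ∧ UsesUpdatedEdge U v p}.ncard = 0 := by
  rw [Set.eq_empty_of_forall_notMem (s := {p | IsShortest w' s t p ∧ UsesUpdatedEdge U v p})
    fun _ ⟨hp, hu⟩ => (hp.dist_add_dist_le hpos' hw hu).not_gt h, Set.ncard_empty]

lemma ncard_isShortest_usesUpdatedEdge_eq_nsp (hw : AgreeOff U v w w')
    (h : dist w' s t < dist w s t) :
    {p | IsShortest w' s t p ∧ UsesUpdatedEdge U v p}.ncard = nsp w' s t := by
  refine congrArg Set.ncard (Set.ext fun p => ⟨And.left, fun hp => ⟨hp, by_contra fun hu => ?_⟩⟩)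
  have hle := dist_le_pWeight ((hw.isPath_iff hu).1 hp.1)
  rw [← hw.pWeight_eq hu, hp.2] at hle
  exact hle.not_gt h

lemma setOf_isShortest_usesUpdatedEdge_eq_image (hpos' : ∀ a b, 0 < w' a b)
    (hw : AgreeOff U v w w') (hdec : ∀ u ∈ U, w' u v < w u v)
    (hst : dist w' s t = dist w' s v + dist w v t) (hfin : dist w' s t ≠ ⊤) :
    {p | IsShortest w' s t p ∧ UsesUpdatedEdge U v p} =
      (fun qr : List V × List V => qr.1 ++ qr.2.tail) ''
        ({q | IsShortest w' s v q ∧ UsesUpdatedEdge U v q} ×ˢ {r | IsShortest w v t r}) := by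
  ext p
  constructor
  · rintro ⟨hp, hu⟩
    obtain ⟨q, r, rfl, hq, hqu, hr, hweight⟩ := hp.exists_eq_append_cons hpos' hw hu
    obtain ⟨hq', hr'⟩ := eq_and_eq_of_add_eq_add (dist_le_pWeight hq) (dist_le_pWeight hr)
      (by rw [← hweight, hp.2, hst]) (hst ▸ hfin)
    exact ⟨(q ++ [v], v :: r), ⟨⟨⟨hq, hq'⟩, hqu⟩, hr, hr'⟩, by simp⟩
  · rintro ⟨⟨q, r⟩, ⟨⟨hq, hqu⟩, hr⟩, rfl⟩
    obtain ⟨q, rfl⟩ := hq.1.eq_append_singleton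
    obtain ⟨r, rfl⟩ := hr.1.eq_cons
    change IsShortest w' s t (q ++ [v] ++ r) ∧ UsesUpdatedEdge U v (q ++ [v] ++ r)
    rw [List.append_assoc, List.singleton_append]
    exact ⟨isShortest_append_cons (hw.le hdec) hst hq hr, hqu.append_cons⟩

lemma ncard_isShortest_usesUpdatedEdge (hpos' : ∀ a b, 0 < w' a b) (hw : AgreeOff U v w w')
    (hdec : ∀ u ∈ U, w' u v < w u v) (hst : dist w' s t = dist w' s v + dist w v t) :
    {p | IsShortest w' s t p ∧ UsesUpdatedEdge U v p}.ncard =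
      {q | IsShortest w' s v q ∧ UsesUpdatedEdge U v q}.ncard * nsp w v t := by
  by_cases hfin : dist w' s t = ⊤
  · rw [setOf_isShortest_and_eq_empty hfin, Set.ncard_empty]
    rcases ENNReal.add_eq_top.1 (hst ▸ hfin) with hsv | hvt
    · rw [setOf_isShortest_and_eq_empty hsv, Set.ncard_empty, zero_mul]
    · rw [nsp_eq_zero_of_dist_eq_top hvt, mul_zero]
  rw [nsp, ← Set.ncard_prod, setOf_isShortest_usesUpdatedEdge_eq_image hpos' hw hdec hst hfin,
    Set.InjOn.ncard_image]
  rintro ⟨q₁, r₁⟩ ⟨⟨hq₁, -⟩, hr₁⟩ ⟨q₂, r₂⟩ ⟨⟨hq₂, -⟩, hr₂⟩ heq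
  obtain ⟨q₁, rfl⟩ := hq₁.1.eq_append_singleton
  obtain ⟨r₁, rfl⟩ := hr₁.1.eq_cons
  obtain ⟨q₂, rfl⟩ := hq₂.1.eq_append_singleton
  obtain ⟨r₂, rfl⟩ := hr₂.1.eq_cons
  simp only [List.tail_cons, List.append_assoc, List.singleton_append] at heq
  -- the concatenation is a shortest, hence simple, path of `G'`: `v` occurs in it only once
  obtain ⟨hvq, hvr⟩ :=
    notMem_of_nodup_append_cons ((isShortest_append_cons (hw.le hdec) hst hq₁ hr₁).nodup hpos')
  obtain ⟨rfl, -, rfl⟩ := (List.append_cons_inj_of_notMem hvq hvr).1 heq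
  rfl

end Update

theorem vertex_update_dist_sigma_general [Fintype V]
(w w' : V → V → ℝ≥0∞) (v : V) (U : Finset V)
    (hpos' : ∀ a b, 0 < w' a b)
    (hdec : ∀ u ∈ U, w' u v < w u v)
    (hsame : ∀ a b : V, ¬(b = v ∧ a ∈ U) → w' a b = w a b)
    (s t : V) :
    (dist w s t < dist w' s v + dist w v t →
      dist w' s t = dist w s t ∧ nsp w' s t = nsp w s t) ∧
    (dist w s t = dist w' s v + dist w v t → dist w s v = dist w' s v →
      dist w' s t = dist w s t ∧
      nsp w' s t = nsp w s t +
        Set.ncard {p | IsShortest w' s v p ∧ ∃ u ∈ U, edgeOn p u v} * nsp w v t) ∧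
    (dist w s t = dist w' s v + dist w v t → dist w' s v < dist w s v →
      dist w' s t = dist w s t ∧
      nsp w' s t = nsp w s t + nsp w' s v * nsp w v t) ∧
    (dist w' s v + dist w v t < dist w s t →
      dist w' s t = dist w' s v + dist w v t ∧
      nsp w' s t = nsp w' s v * nsp w v t) := by
  have hmin := dist_eq_min_of_agreeOff hpos' hsame hdec s t
  have hsplit := nsp_eq_ncard_add_ncard hpos' (UsesUpdatedEdge U v) s t
  refine ⟨fun h => ?_, fun h _ => ?_, fun h hsv => ?_, fun h => ?_⟩
  · have hdd : dist w' s t = dist w s t := by rw [hmin, min_eq_left h.le]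
    refine ⟨hdd, ?_⟩
    rw [hsplit, ncard_isShortest_not_usesUpdatedEdge hsame hdec hdd,
      ncard_isShortest_usesUpdatedEdge_eq_zero hpos' hsame (hdd ▸ h), add_zero]
  · have hdd : dist w' s t = dist w s t := by rw [hmin, ← h, min_self]
    refine ⟨hdd, ?_⟩
    rw [hsplit, ncard_isShortest_not_usesUpdatedEdge hsame hdec hdd,
      ncard_isShortest_usesUpdatedEdge hpos' hsame hdec (hdd.trans h)]
    rfl
  · have hdd : dist w' s t = dist w s t := by rw [hmin, ← h, min_self]
    refine ⟨hdd, ?_⟩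
    rw [hsplit, ncard_isShortest_not_usesUpdatedEdge hsame hdec hdd,
      ncard_isShortest_usesUpdatedEdge hpos' hsame hdec (hdd.trans h),
      ncard_isShortest_usesUpdatedEdge_eq_nsp hsame hsv]
  · have hdd : dist w' s t = dist w' s v + dist w v t := by rw [hmin, min_eq_right h.le]
    have hsv : dist w' s v < dist w s v :=
      lt_of_add_lt_add_right (h.trans_le (dist_triangle w s v t))
    refine ⟨hdd, ?_⟩
    rw [← ncard_isShortest_usesUpdatedEdge_eq_nsp hsame (hdd ▸ h),
      ncard_isShortest_usesUpdatedEdge hpos' hsame hdec hdd,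
      ncard_isShortest_usesUpdatedEdge_eq_nsp hsame hsv]

/-- Lemma 4: after an incremental update on the edges `E_i(v)` incoming
to `v`, for `t ≠ v` and `D(s,t) = d'(s,v) + d(v,t)` (where `σ̂'_{sv}` denotes the number
of shortest `s`–`v` paths of `G'` using an edge of `E_i(v)`):
(1) if `d(s,t) < D(s,t)` then `d'(s,t) = d(s,t)` and `σ'_{st} = σ_{st}`;
(2) if `d(s,t) = D(s,t)` and `d(s,v) = d'(s,v)` then `d'(s,t) = d(s,t)` and
    `σ'_{st} = σ_{st} + σ̂'_{sv}·σ_{vt}`;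
(3) if `d(s,t) = D(s,t)` and `d(s,v) > d'(s,v)` then `d'(s,t) = d(s,t)` and
    `σ'_{st} = σ_{st} + σ'_{sv}·σ_{vt}`;
(4) if `d(s,t) > D(s,t)` then `d'(s,t) = D(s,t)` and `σ'_{st} = σ'_{sv}·σ_{vt}`. -/
theorem vertex_update_dist_sigma [Fintype V]
(w w' : V → V → ℝ≥0∞) (v : V) (U : Finset V)
    (hpos : ∀ a b, 0 < w a b) (hpos' : ∀ a b, 0 < w' a b)
    (hdec : ∀ u ∈ U, w' u v < w u v)
    (hsame : ∀ a b : V, ¬(b = v ∧ a ∈ U) → w' a b = w a b)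
    (s t : V) (htv : t ≠ v) :
    (dist w s t < dist w' s v + dist w v t →
      dist w' s t = dist w s t ∧ nsp w' s t = nsp w s t) ∧
    (dist w s t = dist w' s v + dist w v t → dist w s v = dist w' s v →
      dist w' s t = dist w s t ∧
      nsp w' s t = nsp w s t +
        Set.ncard {p | IsShortest w' s v p ∧ ∃ u ∈ U, edgeOn p u v} * nsp w v t) ∧
    (dist w s t = dist w' s v + dist w v t → dist w' s v < dist w s v →
      dist w' s t = dist w s t ∧
      nsp w' s t = nsp w s t + nsp w' s v * nsp w v t) ∧
    (dist w' s v + dist w v t < dist w s t →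
      dist w' s t = dist w' s v + dist w v t ∧
      nsp w' s t = nsp w' s v * nsp w v t) :=
  vertex_update_dist_sigma_general w w' v U hpos' hdec hsame s t

end BC
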